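/- Let Σ₁, …, Σ_n be symmetric positive definite d×d real matrices and λ₁, …, λ_n real weights with Σ_{k=1}^n λ_k = 1 satisfying the Spectral Dominance of Positive Weights condition, and set Δ = Σ_{i∈I} λ_i⁺ √λ_min(Σ_i) − Σ_{j∈J} λ_j⁻ √λ_max(Σ_j) > 0. Then for every symmetric positive definite d×d matrix S, Σ_{k=1}^n λ_k (S^{1/2} Σ_k S^{1/2})^{1/2} ⪰ Δ · S^{1/2} in the Löwner order; in particular, Σ_{k=1}^n λ_k (S^{1/2} Σ_k S^{1/2})^{1/2} is positive definite. -/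

import Mathlib

open Matrix BigOperators Finset
open scoped Classical

/-- Unique positive semidefinite square root of a positive semidefinite matrix
(and junk value `0` on other matrices). -/
noncomputable def msqrt {d : ℕ} (M : Matrix (Fin d) (Fin d) ℝ) :
    Matrix (Fin d) (Fin d) ℝ :=
  if h : M.PosSemidef then
    (h.1.eigenvectorUnitary : Matrix (Fin d) (Fin d) ℝ) *
      diagonal ((↑) ∘ (√·) ∘ h.1.eigenvalues) *
      (star h.1.eigenvectorUnitary : Matrix (Fin d) (Fin d) ℝ)
  else 0

/-- Smallest eigenvalue of a symmetric matrix (junk value `0` otherwise). -/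
noncomputable def lmin {d : ℕ} (M : Matrix (Fin d) (Fin d) ℝ) : ℝ :=
  if h : M.IsHermitian then ⨅ i, h.eigenvalues i else 0

/-- Largest eigenvalue of a symmetric matrix (junk value `0` otherwise). -/
noncomputable def lmax {d : ℕ} (M : Matrix (Fin d) (Fin d) ℝ) : ℝ :=
  if h : M.IsHermitian then ⨆ i, h.eigenvalues i else 0

/-- Squared Bures–Wasserstein distance. -/
noncomputable def W2sq {d : ℕ} (A B : Matrix (Fin d) (Fin d) ℝ) : ℝ :=
  A.trace + B.trace - 2 * (msqrt (msqrt A * B * msqrt A)).trace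

/-- The conditional barycenter objective `F`. -/
noncomputable def Fobj {d n : ℕ} (Sig : Fin n → Matrix (Fin d) (Fin d) ℝ)
    (lam : Fin n → ℝ) (S : Matrix (Fin d) (Fin d) ℝ) : ℝ :=
  ∑ k, lam k * W2sq S (Sig k)

/-- Geometric mean `GM(S⁻¹, Σ) = S^{-1/2} (S^{1/2} Σ S^{1/2})^{1/2} S^{-1/2}`. -/
noncomputable def GMinv {d : ℕ} (S Sigma : Matrix (Fin d) (Fin d) ℝ) :
    Matrix (Fin d) (Fin d) ℝ :=
  (msqrt S)⁻¹ * msqrt (msqrt S * Sigma * msqrt S) * (msqrt S)⁻¹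

/-- The Spectral Dominance of Positive Weights condition. -/
def SDPW {d n : ℕ} (Sig : Fin n → Matrix (Fin d) (Fin d) ℝ) (lam : Fin n → ℝ) : Prop :=
  ∑ j ∈ Finset.univ.filter (fun k => lam k < 0), (-lam j) * Real.sqrt (lmax (Sig j))
    < ∑ i ∈ Finset.univ.filter (fun k => 0 < lam k), lam i * Real.sqrt (lmin (Sig i))

/-!
Write `A = S^{1/2}`. Each `Σₖ` satisfies `λ_min(Σₖ) I ⪯ Σₖ ⪯ λ_max(Σₖ) I`; conjugating by `A`
gives `λ_min(Σₖ) A² ⪯ A Σₖ A ⪯ λ_max(Σₖ) A²`, and since the matrix square root is operator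
monotone, `√λ_min(Σₖ) A ⪯ (A Σₖ A)^{1/2} ⪯ √λ_max(Σₖ) A`. Multiplying the lower bound by the
positive weights and the upper bound by the negative ones and summing yields
`∑ₖ λₖ (A Σₖ A)^{1/2} ⪰ Δ A`, which is positive definite as `Δ > 0` and `A ≻ 0`.
-/

open scoped MatrixOrder

namespace Matrix

variable {ι : Type*} [Fintype ι] [DecidableEq ι]

theorem le_of_mul_self_le_mul_self {A B : Matrix ι ι ℝ} (hA : 0 ≤ A) (hB : 0 ≤ B)
    (h : A * A ≤ B * B) : A ≤ B := by
  have hC : (B - A).IsHermitian := hB.posSemidef.1.sub hA.posSemidef.1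
  refine hC.posSemidef_iff_eigenvalues_nonneg.mpr fun i => (?_ : (0 : ℝ) ≤ _)
  set μ := hC.eigenvalues i
  set v := (hC.eigenvectorBasis i).ofLp
  -- An eigenvector `v` of `B - A` with eigenvalue `μ < 0` would give `Bv = Av + μv`, whence
  -- `⟨v, (B² - A²)v⟩ = μ (2⟨v, Av⟩ + μ) < 0` because `⟨v, Bv⟩ = ⟨v, Av⟩ + μ ≥ 0`.
  by_contra! hμ
  have hBv : B *ᵥ v = A *ᵥ v + μ • v := by
    rw [← hC.mulVec_eigenvectorBasis i, sub_mulVec]; abel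
  have hv_unit : v ⬝ᵥ v = 1 := by
    have h1 := real_inner_self_eq_norm_sq (hC.eigenvectorBasis i)
    rw [hC.eigenvectorBasis.orthonormal.1 i, EuclideanSpace.inner_eq_star_dotProduct] at h1
    simpa using h1
  have hsymm : ∀ {M : Matrix ι ι ℝ}, 0 ≤ M → ∀ w, v ⬝ᵥ M *ᵥ w = (M *ᵥ v) ⬝ᵥ w := by
    intro M hM w
    rw [dotProduct_mulVec, ← mulVec_transpose, ← conjTranspose_eq_transpose_of_trivial,
      hM.posSemidef.1.eq]
  have hsq : 0 ≤ v ⬝ᵥ (B * B - A * A) *ᵥ v := by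
    simpa using (Matrix.le_iff.mp h).dotProduct_mulVec_nonneg v
  have hBv_nonneg : 0 ≤ v ⬝ᵥ B *ᵥ v := by
    simpa using hB.posSemidef.dotProduct_mulVec_nonneg v
  rw [sub_mulVec, dotProduct_sub, ← mulVec_mulVec, ← mulVec_mulVec, hsymm hB, hsymm hA, hBv] at hsq
  rw [hBv] at hBv_nonneg
  simp only [add_dotProduct, dotProduct_add, smul_dotProduct, dotProduct_smul, smul_eq_mul,
    dotProduct_comm v (A *ᵥ v)] at hsq hBv_nonneg
  nlinarith [mul_pos_of_neg_of_neg hμ hμ]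

end Matrix

theorem mul_smul_one_mul_eq_sqrt_smul_mul_self {R : Type*} [Ring R] [Algebra ℝ R] (a : R)
    {c : ℝ} (hc : 0 ≤ c) : a * (c • 1) * a = (√c • a) * (√c • a) := by
  rw [smul_mul_smul_comm, Real.mul_self_sqrt hc, mul_smul_one, smul_mul_assoc]

section

variable {d : ℕ} {M : Matrix (Fin d) (Fin d) ℝ}

theorem msqrt_eq_sqrt (M : Matrix (Fin d) (Fin d) ℝ) : msqrt M = CFC.sqrt M := by
  by_cases hM : 0 ≤ M
  · rw [msqrt, dif_pos hM.posSemidef, CFC.sqrt_eq_real_sqrt M hM, cfcₙ_eq_cfc,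
      hM.posSemidef.1.cfc_eq, IsHermitian.cfc, Unitary.conjStarAlgAut_apply]
    rfl
  · rw [msqrt, dif_neg (mt PosSemidef.nonneg hM), CFC.sqrt, cfcₙ_apply_of_not_predicate M hM]

theorem msqrt_nonneg (M : Matrix (Fin d) (Fin d) ℝ) : 0 ≤ msqrt M :=
  msqrt_eq_sqrt M ▸ CFC.sqrt_nonneg M

theorem msqrt_mul_self (hM : 0 ≤ M) : msqrt M * msqrt M = M := by
  rw [msqrt_eq_sqrt, CFC.sqrt_mul_sqrt_self M hM]

theorem posDef_msqrt (hM : M.PosDef) : (msqrt M).PosDef := by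
  rw [msqrt_eq_sqrt]
  exact (IsStrictlyPositive.sqrt M hM.isStrictlyPositive).posDef

theorem lmin_nonneg (hM : 0 ≤ M) : 0 ≤ lmin M := by
  rw [lmin, dif_pos hM.posSemidef.1]
  exact Real.iInf_nonneg hM.posSemidef.eigenvalues_nonneg

theorem lmax_nonneg (hM : 0 ≤ M) : 0 ≤ lmax M := by
  rw [lmax, dif_pos hM.posSemidef.1]
  exact Real.iSup_nonneg hM.posSemidef.eigenvalues_nonneg

theorem lmin_smul_one_le (hM : M.IsHermitian) : lmin M • 1 ≤ M := by
  rw [← Algebra.algebraMap_eq_smul_one]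
  refine algebraMap_le_of_le_spectrum (fun x hx => ?_) hM.isSelfAdjoint
  obtain ⟨i, rfl⟩ := hM.spectrum_real_eq_range_eigenvalues ▸ hx
  rw [lmin, dif_pos hM]
  exact ciInf_le (Set.finite_range _).bddBelow i

theorem le_lmax_smul_one (hM : M.IsHermitian) : M ≤ lmax M • 1 := by
  rw [← Algebra.algebraMap_eq_smul_one]
  refine le_algebraMap_of_spectrum_le (fun x hx => ?_) hM.isSelfAdjoint
  obtain ⟨i, rfl⟩ := hM.spectrum_real_eq_range_eigenvalues ▸ hx
  rw [lmax, dif_pos hM]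
  exact le_ciSup (Set.finite_range _).bddAbove i

variable {A Sigma : Matrix (Fin d) (Fin d) ℝ} {c : ℝ}

theorem sqrt_smul_le_msqrt_conj (hA : 0 ≤ A) (hc : 0 ≤ c) (h : c • 1 ≤ Sigma) :
    √c • A ≤ msqrt (A * Sigma * A) := by
  have hSigma : 0 ≤ A * Sigma * A :=
    conjugate_nonneg_of_nonneg ((smul_nonneg hc zero_le_one).trans h) hA
  refine Matrix.le_of_mul_self_le_mul_self (smul_nonneg (Real.sqrt_nonneg c) hA)
    (msqrt_nonneg _) ?_
  rw [msqrt_mul_self hSigma, ← mul_smul_one_mul_eq_sqrt_smul_mul_self A hc]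
  exact conjugate_le_conjugate_of_nonneg h hA

theorem msqrt_conj_le_sqrt_smul (hA : 0 ≤ A) (hSigma : 0 ≤ Sigma) (hc : 0 ≤ c)
    (h : Sigma ≤ c • 1) : msqrt (A * Sigma * A) ≤ √c • A := by
  refine Matrix.le_of_mul_self_le_mul_self (msqrt_nonneg _)
    (smul_nonneg (Real.sqrt_nonneg c) hA) ?_
  rw [msqrt_mul_self (conjugate_nonneg_of_nonneg hSigma hA),
    ← mul_smul_one_mul_eq_sqrt_smul_mul_self A hc]
  exact conjugate_le_conjugate_of_nonneg h hA

end

theorem smul_le_sum_smul_of_sign_bounds {ι E : Type*} [AddCommGroup E] [PartialOrder E]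
    [IsOrderedAddMonoid E] [Module ℝ E] [PosSMulMono ℝ E] (s : Finset ι) (lam lo hi : ι → ℝ)
    (A : E) (X : ι → E) (hlo : ∀ i ∈ s, 0 < lam i → lo i • A ≤ X i)
    (hhi : ∀ i ∈ s, lam i < 0 → X i ≤ hi i • A) :
    (∑ i ∈ s with 0 < lam i, lam i * lo i - ∑ i ∈ s with lam i < 0, -lam i * hi i) • A ≤
      ∑ i ∈ s, lam i • X i := by
  set w := fun i => if 0 < lam i then lo i else hi i
  have hcoeff : ∑ i ∈ s with 0 < lam i, lam i * lo i - ∑ i ∈ s with lam i < 0, -lam i * hi i =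
      ∑ i ∈ s, lam i * w i := by
    rw [sum_filter, sum_filter, ← sum_sub_distrib]
    refine sum_congr rfl fun i _ => ?_
    rcases lt_trichotomy (lam i) 0 with h | h | h
    · simp [w, h, h.asymm]
    · simp [h]
    · simp [w, h, h.asymm]
  rw [hcoeff, sum_smul]
  refine sum_le_sum fun i his => ?_
  rw [mul_smul]
  rcases lt_trichotomy (lam i) 0 with h | h | h
  · simpa [w, h.asymm] using smul_le_smul_of_nonpos_left (hhi i his h) h.le
  · simp [h]
  · simpa [w, h] using smul_le_smul_of_nonneg_left (hlo i his h) h.le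

theorem stmt11_general {d n : ℕ} (Sig : Fin n → Matrix (Fin d) (Fin d) ℝ)
    (lam : Fin n → ℝ) (hSig : ∀ k, (Sig k).PosDef)
    (hSD : SDPW Sig lam)
    (Delta : ℝ)
    (hDelta : Delta = (∑ i ∈ Finset.univ.filter (fun k => 0 < lam k), lam i * Real.sqrt (lmin (Sig i)))
        - ∑ j ∈ Finset.univ.filter (fun k => lam k < 0), (-lam j) * Real.sqrt (lmax (Sig j)))
    (S : Matrix (Fin d) (Fin d) ℝ) (hS : S.PosDef) :
    ((∑ k, lam k • msqrt (msqrt S * Sig k * msqrt S)) - Delta • msqrt S).PosSemidef ∧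
    (∑ k, lam k • msqrt (msqrt S * Sig k * msqrt S)).PosDef := by
  have hA : 0 ≤ msqrt S := msqrt_nonneg S
  have hbound : Delta • msqrt S ≤ ∑ k, lam k • msqrt (msqrt S * Sig k * msqrt S) := by
    rw [hDelta]
    refine smul_le_sum_smul_of_sign_bounds _ _ _ _ _ _ (fun k _ _ => ?_) (fun k _ _ => ?_)
    · exact sqrt_smul_le_msqrt_conj hA (lmin_nonneg (hSig k).posSemidef.nonneg)
        (lmin_smul_one_le (hSig k).1)
    · exact msqrt_conj_le_sqrt_smul hA (hSig k).posSemidef.nonneg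
        (lmax_nonneg (hSig k).posSemidef.nonneg) (le_lmax_smul_one (hSig k).1)
  have hDelta_pos : 0 < Delta := hDelta ▸ sub_pos.mpr hSD
  refine ⟨Matrix.le_iff.mp hbound, ?_⟩
  rw [← sub_add_cancel (∑ k, _) (Delta • msqrt S)]
  exact PosDef.posSemidef_add (Matrix.le_iff.mp hbound) ((posDef_msqrt hS).smul hDelta_pos)

/-- under Spectral Dominance,
`∑ₖ λₖ (S^(1/2) Σₖ S^(1/2))^(1/2) ⪰ Δ • S^(1/2)`, in particular it is positive definite. -/
theorem stmt11 {d n : ℕ} (Sig : Fin n → Matrix (Fin d) (Fin d) ℝ)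
    (lam : Fin n → ℝ) (hSig : ∀ k, (Sig k).PosDef) (hsum : ∑ k, lam k = 1)
    (hSD : SDPW Sig lam)
    (Delta : ℝ)
    (hDelta : Delta = (∑ i ∈ Finset.univ.filter (fun k => 0 < lam k), lam i * Real.sqrt (lmin (Sig i)))
        - ∑ j ∈ Finset.univ.filter (fun k => lam k < 0), (-lam j) * Real.sqrt (lmax (Sig j)))
    (S : Matrix (Fin d) (Fin d) ℝ) (hS : S.PosDef) :
    ((∑ k, lam k • msqrt (msqrt S * Sig k * msqrt S)) - Delta • msqrt S).PosSemidef ∧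
    (∑ k, lam k • msqrt (msqrt S * Sig k * msqrt S)).PosDef :=
  stmt11_general Sig lam hSig hSD Delta hDelta S hS
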